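/- Let T : ℓ²(ℕ) → ℓ²(ℕ) be a unilateral weighted shift with weight sequence (w_n)_{n∈ℕ}. If T is topologically mixing or chaotic, then T is topologically multiply recurrent. -/

import Mathlib

open Filter Topology

/-- Topological multiple recurrence for an operator. -/
def TopMultiplyRecurrent {X : Type*} [NormedAddCommGroup X] [NormedSpace ℂ X]
    (T : X →L[ℂ] X) : Prop :=
  ∀ U : Set X, IsOpen U → U.Nonempty → ∀ m : ℕ, 0 < m →
    ∃ k : ℕ, 0 < k ∧
      (⋂ j ∈ Finset.range (m + 1), (T ^ (j * k) : X →L[ℂ] X) ⁻¹' U).Nonempty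

/-- An operator is topologically mixing. -/
def TopMixing {X : Type*} [NormedAddCommGroup X] [NormedSpace ℂ X]
    (T : X →L[ℂ] X) : Prop :=
  ∀ U V : Set X, IsOpen U → IsOpen V → U.Nonempty → V.Nonempty →
    ∃ N : ℕ, ∀ n : ℕ, N ≤ n → ((T ^ n : X →L[ℂ] X) '' U ∩ V).Nonempty

/-- An operator is chaotic: hypercyclic with a dense set of periodic points. -/
def ChaoticOp {X : Type*} [NormedAddCommGroup X] [NormedSpace ℂ X]
    (T : X →L[ℂ] X) : Prop :=
  (∃ x : X, Dense (Set.range fun n : ℕ => (T ^ n) x)) ∧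
    Dense {x : X | ∃ n : ℕ, 0 < n ∧ (T ^ n) x = x}

noncomputable section WSAux

abbrev XX := lp (fun _ : ℕ => ℂ) 2

def ee (n : ℕ) : XX := lp.single 2 n (1 : ℂ)

def wprod (w : ℕ → ℝ) (n q : ℕ) : ℝ := ∏ i ∈ Finset.Ioc n (n + q), w i

lemma wprod_zero (w : ℕ → ℝ) (n : ℕ) : wprod w n 0 = 1 := by
  simp [wprod]

lemma wprod_pos {w : ℕ → ℝ} (hw : ∀ n : ℕ, 1 ≤ n → 0 < w n) (n q : ℕ) :
    0 < wprod w n q := by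
  refine Finset.prod_pos fun i hi => hw i ?_
  have := (Finset.mem_Ioc.mp hi).1
  omega

lemma wprod_add (w : ℕ → ℝ) (n a b : ℕ) :
    wprod w n (a + b) = wprod w n a * wprod w (n + a) b := by
  unfold wprod
  rw [show n + (a + b) = n + a + b by omega]
  exact (Finset.prod_Ioc_consecutive w (by omega : n ≤ n + a) (by omega : n + a ≤ n + a + b)).symm

section T
variable {T : XX →L[ℂ] XX} {w : ℕ → ℝ}
  (hT0 : T (lp.single 2 0 (1 : ℂ)) = 0)
  (hT : ∀ n : ℕ, T (lp.single 2 (n + 1) (1 : ℂ)) =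
      (w (n + 1) : ℂ) • lp.single 2 n (1 : ℂ))

include hT in
lemma Tpow_ee (q n : ℕ) : (T ^ q) (ee (n + q)) = ((wprod w n q : ℝ) : ℂ) • ee n := by
  induction q with
  | zero => simp [wprod_zero]
  | succ q ih =>
    have h1 : T (ee (n + (q + 1))) = ((w (n + q + 1) : ℝ) : ℂ) • ee (n + q) := by
      have := hT (n + q)
      simpa [ee, show n + (q + 1) = (n + q) + 1 by omega] using this
    rw [pow_succ, ContinuousLinearMap.mul_apply, h1, map_smul, ih]
    rw [smul_smul]
    congr 1
    have h2 : wprod w n (q + 1) = wprod w n q * w (n + q + 1) := by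
      unfold wprod
      rw [show n + (q + 1) = (n + q) + 1 by omega]
      exact Finset.prod_Ioc_succ_top (by omega : n ≤ n + q) w
    rw [h2]
    push_cast
    ring

include hT0 hT in
lemma Tpow_ee_zero {q n : ℕ} (h : n < q) : (T ^ q) (ee n) = 0 := by
  have key : ∀ n : ℕ, (T ^ (n + 1)) (ee n) = 0 := by
    intro n
    induction n with
    | zero => simpa [ee] using hT0
    | succ n ih =>
      rw [pow_succ, ContinuousLinearMap.mul_apply]
      have h1 : T (ee (n + 1)) = ((w (n + 1) : ℝ) : ℂ) • ee n := by
        simpa [ee] using hT n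
      rw [h1, map_smul, ih, smul_zero]
  have hq : q = (q - (n + 1)) + (n + 1) := by omega
  rw [hq, pow_add, ContinuousLinearMap.mul_apply, key, map_zero]

end T

end WSAux
noncomputable section WSAux2

open scoped InnerProductSpace ComplexConjugate

lemma coord_eq_inner (f : XX) (n : ℕ) : ⟪ee n, f⟫_ℂ = f n := by
  rw [ee, lp.inner_single_left]
  simp

section T
variable {T : XX →L[ℂ] XX} {w : ℕ → ℝ}
  (hT0 : T (lp.single 2 0 (1 : ℂ)) = 0)
  (hT : ∀ n : ℕ, T (lp.single 2 (n + 1) (1 : ℂ)) =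
      (w (n + 1) : ℂ) • lp.single 2 n (1 : ℂ))

include hT0 hT in
lemma Tpow_coord (q n : ℕ) (s : XX) :
    ((T ^ q) s) n = ((wprod w n q : ℝ) : ℂ) * s (n + q) := by
  classical
  set φ : XX →L[ℂ] ℂ := (innerSL ℂ (ee n)).comp (T ^ q) with hφdef
  have hs : HasSum (fun i : ℕ => lp.single 2 i (s i)) s :=
    lp.hasSum_single (by norm_num) s
  have hφ : HasSum (fun i : ℕ => φ (lp.single 2 i (s i))) (φ s) := hs.mapL φ
  have hval : ∀ i : ℕ, φ (lp.single 2 i (s i)) =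
      if i = n + q then ((wprod w n q : ℝ) : ℂ) * s (n + q) else 0 := by
    intro i
    have hsingle : lp.single 2 i (s i) = (s i) • ee i := by
      rw [ee, ← lp.single_smul]
      norm_num
    have hφi : φ (lp.single 2 i (s i)) = (s i) * ⟪ee n, (T ^ q) (ee i)⟫_ℂ := by
      rw [hsingle]
      simp [hφdef, inner_smul_right]
    by_cases hi : i = n + q
    · subst hi
      rw [hφi, Tpow_ee hT, inner_smul_right, coord_eq_inner]
      rw [if_pos rfl]
      have h1 : (ee n : ∀ _ : ℕ, ℂ) n = 1 := by
        simp [ee, lp.single_apply_self]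
      rw [h1]
      ring
    · rw [if_neg hi, hφi]
      rcases lt_or_ge i q with hlt | hge
      · rw [Tpow_ee_zero hT0 hT hlt, inner_zero_right, mul_zero]
      · have hi' : i = (i - q) + q := by omega
        rw [hi', Tpow_ee hT, inner_smul_right, coord_eq_inner]
        have hne : n ≠ i - q := by omega
        have h0 : (ee (i - q) : ∀ _ : ℕ, ℂ) n = 0 := by
          rw [ee, lp.single_apply, Pi.single_eq_of_ne hne]
        rw [h0]
        ring
  rw [funext hval] at hφ
  have h2 : HasSum (fun i : ℕ => if i = n + q then ((wprod w n q : ℝ) : ℂ) * s (n + q) else 0)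
      (((wprod w n q : ℝ) : ℂ) * s (n + q)) := hasSum_ite_eq (n + q) _
  have hφs : φ s = ((wprod w n q : ℝ) : ℂ) * s (n + q) := hφ.unique h2
  rw [← hφs]
  simp [hφdef, coord_eq_inner]

include hT0 hT in
lemma mixing_growth (hw : ∀ n : ℕ, 1 ≤ n → 0 < w n) (hmix : TopMixing T)
    (n : ℕ) (R : ℝ) (hR : 0 < R) :
    ∃ Q : ℕ, ∀ q : ℕ, Q ≤ q → R ≤ wprod w n q := by
  set r : ℝ := 1 / (2 * R) with hr
  have hrpos : 0 < r := by positivity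
  obtain ⟨N, hN⟩ := hmix (Metric.ball (0 : XX) r) (Metric.ball (ee n) (1/2))
    Metric.isOpen_ball Metric.isOpen_ball
    ⟨0, Metric.mem_ball_self hrpos⟩ ⟨ee n, Metric.mem_ball_self (by norm_num)⟩
  refine ⟨N, fun q hq => ?_⟩
  obtain ⟨y, ⟨x, hx, hxy⟩, hy⟩ := hN q hq
  subst hxy
  have hxnorm : ‖x‖ < r := by simpa [Metric.mem_ball, dist_zero_right] using hx
  have hgoal : ‖((T ^ q) x) n - 1‖ < 1/2 := by
    have h1 : ‖(T ^ q) x - ee n‖ < 1/2 := by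
      simpa [Metric.mem_ball, dist_eq_norm] using hy
    have h2 : ‖((T ^ q) x - ee n) n‖ ≤ ‖(T ^ q) x - ee n‖ :=
      lp.norm_apply_le_norm (by norm_num) _ n
    have h3 : ((T ^ q) x - ee n) n = ((T ^ q) x) n - 1 := by
      have h1 : (ee n : ∀ _ : ℕ, ℂ) n = 1 := by
        simp [ee, lp.single_apply_self]
      simp [h1]
    rw [h3] at h2
    linarith
  have hcoord : ((T ^ q) x) n = ((wprod w n q : ℝ) : ℂ) * x (n + q) := Tpow_coord hT0 hT q n x
  have hlow : (1:ℝ)/2 ≤ ‖((T ^ q) x) n‖ := by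
    have h := norm_sub_norm_le (1 : ℂ) (((T ^ q) x) n)
    rw [norm_sub_rev] at h
    simp only [norm_one] at h
    linarith [hgoal, h]
  have hxc : ‖x (n + q)‖ ≤ r := le_of_lt (lt_of_le_of_lt (lp.norm_apply_le_norm (by norm_num) x (n + q)) hxnorm)
  have hwpos := wprod_pos hw n q
  have : (1:ℝ)/2 ≤ wprod w n q * r := by
    calc (1:ℝ)/2 ≤ ‖((T ^ q) x) n‖ := hlow
    _ = wprod w n q * ‖x (n + q)‖ := by
        rw [hcoord, norm_mul, Complex.norm_real, Real.norm_eq_abs, abs_of_pos hwpos]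
    _ ≤ wprod w n q * r := by
        exact mul_le_mul_of_nonneg_left hxc (le_of_lt hwpos)
  rw [hr, mul_one_div] at this
  rw [le_div_iff₀ (by positivity)] at this
  linarith
end T
end WSAux2

noncomputable section WSAux3

section T
variable {T : XX →L[ℂ] XX} {w : ℕ → ℝ}
  (hT0 : T (lp.single 2 0 (1 : ℂ)) = 0)
  (hT : ∀ n : ℕ, T (lp.single 2 (n + 1) (1 : ℂ)) =
      (w (n + 1) : ℂ) • lp.single 2 n (1 : ℂ))

lemma single_eq_smul_ee (i : ℕ) (c : ℂ) : lp.single 2 i c = c • ee i := by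
  rw [ee, ← lp.single_smul]
  norm_num

lemma norm_ee (j : ℕ) : ‖ee j‖ = 1 := by
  have h := lp.norm_single (E := fun _ : ℕ => ℂ) (p := 2) (by norm_num) j (1 : ℂ)
  simpa [ee] using h

include hT0 hT in
set_option maxHeartbeats 1000000 in
lemma mixing_case (hw : ∀ n : ℕ, 1 ≤ n → 0 < w n) (hmix : TopMixing T) :
    TopMultiplyRecurrent T := by
  intro U hUopen hUne m hm
  obtain ⟨u, hu⟩ := hUne
  obtain ⟨ε, hε, hball⟩ := Metric.isOpen_iff.mp hUopen u hu
  -- truncation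
  have hsum : HasSum (fun i : ℕ => lp.single 2 i (u i)) u :=
    lp.hasSum_single (by norm_num) u
  obtain ⟨M, hM⟩ := Metric.tendsto_atTop.mp hsum.tendsto_sum_nat (ε/2) (by positivity)
  set y : XX := ∑ i ∈ Finset.range M, lp.single 2 i (u i) with hydef
  have hy : ‖y - u‖ < ε/2 := by
    have := hM M le_rfl
    rwa [dist_eq_norm] at this
  set C : ℝ := ∑ i ∈ Finset.range M, ‖(u : ∀ _ : ℕ, ℂ) i‖ with hCdef
  have hC0 : 0 ≤ C := Finset.sum_nonneg fun i _ => norm_nonneg _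
  set R : ℝ := 2 * (m : ℝ) * (C + 1) / ε with hRdef
  have hmpos : (0:ℝ) < (m : ℝ) := by exact_mod_cast hm
  have hR : 0 < R := by positivity
  choose Q hQ using fun i : ℕ => mixing_growth hT0 hT hw hmix i R hR
  set k : ℕ := M + 1 + (Finset.range M).sup Q with hkdef
  have hk0 : 0 < k := by omega
  have hkM : M < k := by omega
  have hkQ : ∀ i, i < M → Q i ≤ k := by
    intro i hi
    have := Finset.le_sup (f := Q) (Finset.mem_range.mpr hi)
    omega
  have hklk : ∀ l, 1 ≤ l → k ≤ l * k := fun l hl => Nat.le_mul_of_pos_left k (by omega)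
  -- the building blocks
  set z : ℕ → XX := fun l => ∑ i ∈ Finset.range M,
      ((u i) / ((wprod w i (l * k) : ℝ) : ℂ)) • ee (i + l * k) with hzdef
  have hz0 : z 0 = y := by
    rw [hzdef, hydef]
    refine Finset.sum_congr rfl fun i _ => ?_
    rw [single_eq_smul_ee]
    simp [wprod_zero]
  have hwne : ∀ i q : ℕ, ((wprod w i q : ℝ) : ℂ) ≠ 0 := by
    intro i q
    exact_mod_cast (wprod_pos hw i q).ne'
  -- shifting the blocks down
  have hTz : ∀ j l : ℕ, j ≤ l → (T ^ (j * k)) (z l) = z (l - j) := by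
    intro j l hjl
    rw [hzdef]
    simp only [map_sum, map_smul]
    refine Finset.sum_congr rfl fun i _ => ?_
    have hmul : (l - j) * k + j * k = l * k := by
      rw [← Nat.add_mul]
      congr 1
      omega
    have hidx : i + l * k = (i + (l - j) * k) + j * k := by omega
    rw [hidx, Tpow_ee hT (j * k) (i + (l - j) * k)]
    rw [smul_smul]
    congr 1
    have hsplit : wprod w i (l * k)
        = wprod w i ((l - j) * k) * wprod w (i + (l - j) * k) (j * k) := by
      rw [← wprod_add, hmul]
    have hne1 := hwne i ((l - j) * k)
    have hne2 := hwne (i + (l - j) * k) (j * k)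
    rw [hsplit]
    push_cast
    field_simp
  -- blocks vanish after too many shifts
  have hTz0 : ∀ j l : ℕ, l < j → j ≤ m + 1 → (T ^ (j * k)) (z l) = 0 := by
    intro j l hlj _
    have hmul : (j - l) * k + l * k = j * k := by
      rw [← Nat.add_mul]
      congr 1
      omega
    rw [← hmul, pow_add, ContinuousLinearMap.mul_apply, hTz l l le_rfl]
    have hzz : z (l - l) = z 0 := by rw [Nat.sub_self]
    rw [hzz, hzdef]
    simp only [map_sum, map_smul]
    refine Finset.sum_eq_zero fun i hi => ?_
    have hik : i + 0 * k < (j - l) * k := by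
      have h1 : k ≤ (j - l) * k := Nat.le_mul_of_pos_left k (by omega)
      have h2 : i < M := Finset.mem_range.mp hi
      omega
    rw [Tpow_ee_zero hT0 hT hik, smul_zero]
  -- norm bound on the blocks
  have hnormz : ∀ l : ℕ, 1 ≤ l → ‖z l‖ ≤ C / R := by
    intro l hl
    rw [hzdef]
    refine (norm_sum_le _ _).trans ?_
    rw [hCdef, Finset.sum_div]
    refine Finset.sum_le_sum fun i hi => ?_
    have hi' : i < M := Finset.mem_range.mp hi
    have hwR : R ≤ wprod w i (l * k) := hQ i (l * k) (le_trans (hkQ i hi') (hklk l hl))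
    rw [norm_smul, norm_ee, mul_one, norm_div, Complex.norm_real, Real.norm_eq_abs,
      abs_of_pos (wprod_pos hw i (l * k))]
    gcongr
  -- the recurrent point
  set x : XX := ∑ l ∈ Finset.range (m + 1), z l with hxdef
  have key : ∀ j : ℕ, j ≤ m → ‖(T ^ (j * k)) x - u‖ < ε := by
    intro j hj
    have hTx : (T ^ (j * k)) x = ∑ t ∈ Finset.range (m + 1 - j), z t := by
      rw [hxdef, map_sum]
      rw [Finset.range_eq_Ico,
        ← Finset.sum_Ico_consecutive _ (Nat.zero_le j) (by omega : j ≤ m + 1)]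
      have h1 : ∑ l ∈ Finset.Ico 0 j, (T ^ (j * k)) (z l) = 0 := by
        refine Finset.sum_eq_zero fun l hl => ?_
        have := (Finset.mem_Ico.mp hl).2
        exact hTz0 j l this (by omega)
      have h2 : ∑ l ∈ Finset.Ico j (m + 1), (T ^ (j * k)) (z l)
          = ∑ t ∈ Finset.range (m + 1 - j), z t := by
        rw [Finset.sum_Ico_eq_sum_range]
        refine Finset.sum_congr rfl fun t _ => ?_
        rw [hTz j (j + t) (by omega)]
        congr 1
        omega
      rw [h1, h2, zero_add, Finset.range_eq_Ico]
    rw [hTx, show m + 1 - j = (m - j) + 1 by omega, Finset.sum_range_succ']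
    have hbound : ‖∑ i ∈ Finset.range (m - j), z (i + 1)‖ ≤ (m : ℝ) * (C / R) := by
      refine (norm_sum_le _ _).trans ?_
      have h1 : ∑ i ∈ Finset.range (m - j), ‖z (i + 1)‖
          ≤ ∑ _i ∈ Finset.range (m - j), (C / R) :=
        Finset.sum_le_sum fun i _ => hnormz (i + 1) (by omega)
      refine h1.trans ?_
      rw [Finset.sum_const, nsmul_eq_mul, Finset.card_range]
      have hmj : ((m - j : ℕ) : ℝ) ≤ (m : ℝ) := by exact_mod_cast Nat.sub_le m j
      have hCR : 0 ≤ C / R := div_nonneg hC0 (le_of_lt hR)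
      exact mul_le_mul_of_nonneg_right hmj hCR
    have hsmall : (m : ℝ) * (C / R) < ε / 2 := by
      rw [hRdef, div_div_eq_mul_div, ← mul_div_assoc]
      rw [div_lt_div_iff₀ (by positivity) (by norm_num : (0:ℝ) < 2)]
      nlinarith [mul_pos hmpos hε]
    calc ‖(∑ i ∈ Finset.range (m - j), z (i + 1)) + z 0 - u‖
        ≤ ‖∑ i ∈ Finset.range (m - j), z (i + 1)‖ + ‖z 0 - u‖ := by
          rw [add_sub_assoc]
          exact norm_add_le _ _
      _ < ε / 2 + ε / 2 := by
          rw [hz0]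
          exact add_lt_add_of_le_of_lt (le_trans hbound (le_of_lt hsmall)) hy
      _ = ε := by ring
  refine ⟨k, hk0, ⟨x, ?_⟩⟩
  rw [Set.mem_iInter₂]
  intro j hj
  have hjm : j ≤ m := by
    have := Finset.mem_range.mp hj
    omega
  refine hball ?_
  rw [Metric.mem_ball, dist_eq_norm]
  exact key j hjm

end T
end WSAux3

theorem stmt12
    (w : ℕ → ℝ) (hw_pos : ∀ n : ℕ, 1 ≤ n → 0 < w n)
    (hw_bdd : ∃ C : ℝ, ∀ n : ℕ, w n ≤ C)
    (T : lp (fun _ : ℕ => ℂ) 2 →L[ℂ] lp (fun _ : ℕ => ℂ) 2)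
    (hT0 : T (lp.single 2 0 (1 : ℂ)) = 0)
    (hT : ∀ n : ℕ, T (lp.single 2 (n + 1) (1 : ℂ)) =
      (w (n + 1) : ℂ) • lp.single 2 n (1 : ℂ))
    (hmix_or_chaotic : TopMixing T ∨ ChaoticOp T) :
    TopMultiplyRecurrent T := by
  rcases hmix_or_chaotic with hmix | ⟨_, hper⟩
  · exact mixing_case hT0 hT hw_pos hmix
  · intro U hUopen hUne m hm
    obtain ⟨x, hxper, hxU⟩ := hper.exists_mem_open hUopen hUne
    obtain ⟨n, hn, hfix⟩ := hxper
    have hiter : ∀ j : ℕ, (T ^ (j * n)) x = x := by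
      intro j
      induction j with
      | zero => simp
      | succ j ih =>
        have hjn : (j + 1) * n = j * n + n := by ring
        rw [hjn, pow_add, ContinuousLinearMap.mul_apply, hfix, ih]
    refine ⟨n, hn, ⟨x, ?_⟩⟩
    rw [Set.mem_iInter₂]
    intro j _
    simpa only [Set.mem_preimage, hiter j] using hxU
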